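/- arXiv:2406.10545 — 2 statements merged into one kernel-verified Lean document; each statement's English description precedes it below -/
import Mathlib

section
/- Let G be a linearly ordered abelian group and S a final segment of G. Then 𝒢(S) is the largest subgroup H of G satisfying H ∩ (S − Sᶜ) = ∅, and moreover S − Sᶜ = {γ ∈ G : γ > 0} \ 𝒢(S) = 𝒢(S)⁺. -/
open Pointwise

/-- A final segment of a linearly ordered abelian group: a nonempty proper
upward-closed subset. -/
def IsFinalSegment {G : Type*} [AddCommGroup G] [LinearOrder G] [IsOrderedAddMonoid G] (S : Set G) : Prop :=
  S.Nonempty ∧ S ≠ Set.univ ∧ ∀ a ∈ S, ∀ b, a ≤ b → b ∈ S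

/-- The invariance group of a subset `M`: `𝒢(M) = {γ | M + γ = M}`. -/
def invGrp {G : Type*} [AddCommGroup G] [LinearOrder G] [IsOrderedAddMonoid G] (M : Set G) : Set G :=
  {γ | (fun m => m + γ) '' M = M}

/-! Every element of `S - Sᶜ` is positive, and a positive element outside `𝒢(S)` moves some
point of `Sᶜ` into `S`, hence lies in `S - Sᶜ`. So `S - Sᶜ` is exactly the set of positive
elements outside `𝒢(S)`. Because `S` is upward closed, `𝒢(S)` is convex, so this set is also
`𝒢(S)⁺`; and a subgroup `H` missing `S - Sᶜ` has no positive element outside `𝒢(S)`, so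
`H = {±|h| : h ∈ H} ⊆ 𝒢(S)`. -/

lemma IsFinalSegment.isUpperSet {G : Type*} [AddCommGroup G] [LinearOrder G]
    [IsOrderedAddMonoid G] {S : Set G} (hS : IsFinalSegment S) : IsUpperSet S :=
  fun _ _ hle ha => hS.2.2 _ ha _ hle

section InvGrp

variable {G : Type*} [AddCommGroup G] [LinearOrder G] [IsOrderedAddMonoid G] {M S : Set G} {γ : G}

lemma mem_invGrp_iff : γ ∈ invGrp M ↔ ∀ a : G, a + γ ∈ M ↔ a ∈ M := by
  simp only [invGrp, Set.mem_ofPred_eq, Set.image_add_right, Set.ext_iff, Set.mem_preimage]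
  refine ⟨fun h a => ?_, fun h a => ?_⟩
  · simpa using (h (a + γ)).symm
  · simpa using (h (a + -γ)).symm

def invGrpAddSubgroup (M : Set G) : AddSubgroup G where
  carrier := invGrp M
  add_mem' {γ δ} hγ hδ := mem_invGrp_iff.mpr fun a => by
    rw [← add_assoc, mem_invGrp_iff.mp hδ, mem_invGrp_iff.mp hγ]
  zero_mem' := mem_invGrp_iff.mpr fun a => by rw [add_zero]
  neg_mem' {γ} hγ := mem_invGrp_iff.mpr fun a => by
    simpa using (mem_invGrp_iff.mp hγ (a + -γ)).symm

@[simp]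
lemma mem_invGrpAddSubgroup : γ ∈ invGrpAddSubgroup M ↔ γ ∈ invGrp M := Iff.rfl

lemma notMem_sub_compl_of_mem_invGrp (hγ : γ ∈ invGrp M) : γ ∉ M - Mᶜ := by
  rintro ⟨a, ha, b, hb, rfl⟩
  exact hb ((mem_invGrp_iff.mp hγ b).mp (by rwa [add_sub_cancel]))

lemma pos_of_mem_sub_compl (hS : IsUpperSet S) (hγ : γ ∈ S - Sᶜ) : 0 < γ := by
  obtain ⟨a, ha, b, hb, rfl⟩ := hγ
  by_contra! hle
  exact hb (hS (sub_nonpos.mp hle) ha)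

lemma mem_sub_compl_of_pos_of_notMem_invGrp (hS : IsUpperSet S) (hpos : 0 < γ)
    (hγ : γ ∉ invGrp S) : γ ∈ S - Sᶜ := by
  obtain ⟨a, ha⟩ := not_forall.mp (mt mem_invGrp_iff.mpr hγ)
  have ha_out : a ∉ S := fun hin => ha (iff_of_true (hS (le_add_of_nonneg_right hpos.le) hin) hin)
  have haγ_in : a + γ ∈ S := by_contra fun hout => ha (iff_of_false hout ha_out)
  exact ⟨a + γ, haγ_in, a, ha_out, add_sub_cancel_left a γ⟩

lemma sub_compl_eq_pos_diff_invGrp (hS : IsUpperSet S) :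
    S - Sᶜ = {γ : G | 0 < γ} \ invGrp S := by
  ext γ
  exact ⟨fun h => ⟨pos_of_mem_sub_compl hS h, fun hg => notMem_sub_compl_of_mem_invGrp hg h⟩,
    fun h => mem_sub_compl_of_pos_of_notMem_invGrp hS h.1 h.2⟩

lemma mem_invGrp_of_nonneg_of_le (hS : IsUpperSet S) {h : G} (hh : h ∈ invGrp S)
    (h0 : 0 ≤ γ) (hle : γ ≤ h) : γ ∈ invGrp S :=
  mem_invGrp_iff.mpr fun a =>
    ⟨fun haγ => (mem_invGrp_iff.mp hh a).mp (hS (add_le_add_right hle a) haγ),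
      fun ha => hS (le_add_of_nonneg_right h0) ha⟩

lemma pos_diff_invGrp_eq_setOf_forall_lt (hS : IsUpperSet S) :
    {γ : G | 0 < γ} \ invGrp S = {γ : G | ∀ h ∈ invGrp S, h < γ} := by
  ext γ
  refine ⟨fun ⟨hpos, hγ⟩ h hh => ?_, fun h => ⟨?_, fun hγ => (h γ hγ).false⟩⟩
  · by_contra! hle
    exact hγ (mem_invGrp_of_nonneg_of_le hS hh hpos.le hle)
  · exact h 0 (invGrpAddSubgroup S).zero_mem

lemma subset_invGrp_of_disjoint_sub_compl (hS : IsUpperSet S) (H : AddSubgroup G)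
    (hH : Disjoint (H : Set G) (S - Sᶜ)) : (H : Set G) ⊆ invGrp S := by
  intro h hh
  rw [← mem_invGrpAddSubgroup, ← abs_mem_iff]
  rcases (abs_nonneg h).eq_or_lt with h0 | hpos
  · rw [← h0]
    exact (invGrpAddSubgroup S).zero_mem
  · by_contra hnot
    exact hH.notMem_of_mem_left (abs_mem_iff.mpr hh)
      (mem_sub_compl_of_pos_of_notMem_invGrp hS hpos hnot)

end InvGrp

/-- For a final segment `S` of `G`: the invariance group `𝒢(S)` is the largest subgroup
`H` of `G` with `H ∩ (S - Sᶜ) = ∅`; moreover `S - Sᶜ = {γ | 0 < γ} \ 𝒢(S) = 𝒢(S)⁺`. -/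
theorem invGrp_largest_disjoint_subgroup {G : Type*} [AddCommGroup G] [LinearOrder G] [IsOrderedAddMonoid G]
    (S : Set G) (hS : IsFinalSegment S) :
    (∃ H : AddSubgroup G, (H : Set G) = invGrp S) ∧
    invGrp S ∩ (S - Sᶜ) = ∅ ∧
    (∀ H : AddSubgroup G, (H : Set G) ∩ (S - Sᶜ) = ∅ → (H : Set G) ⊆ invGrp S) ∧
    S - Sᶜ = {γ : G | 0 < γ} \ invGrp S ∧
    S - Sᶜ = {γ : G | ∀ h ∈ invGrp S, h < γ} := by
  have hup := hS.isUpperSet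
  refine ⟨⟨invGrpAddSubgroup S, rfl⟩, ?_, fun H hH => ?_, sub_compl_eq_pos_diff_invGrp hup, ?_⟩
  · exact Set.eq_empty_of_forall_notMem fun γ hγ => notMem_sub_compl_of_mem_invGrp hγ.1 hγ.2
  · exact subset_invGrp_of_disjoint_sub_compl hup H (Set.disjoint_iff_inter_eq_empty.mpr hH)
  · rw [sub_compl_eq_pos_diff_invGrp hup, pos_diff_invGrp_eq_setOf_forall_lt hup]
end

section
/- Let G be a linearly ordered abelian group and S₁, S₂ final segments of G with 𝒢(S₁) ⊊ 𝒢(S₂) (strict inclusion of invariance groups). Then S₁ + (S₂ − S₁ᶜ) = S₂. -/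
/-!
Choose `δ > 0` in `𝒢(S₂) \ 𝒢(S₁)`. As `S₁ + δ ⊊ S₁`, some `a ∈ S₁` has `a - δ ∉ S₁`, and every
`t ∈ S₂` decomposes as `t = a + ((t - δ) - (a - δ))` with `t - δ ∈ S₂`. Conversely, `b < p` for
`p ∈ S₁` and `b ∉ S₁`, so `p + (s - b) = s + (p - b) ≥ s` stays in the upper set `S₂`.
-/

open Pointwise

section

variable {G : Type*} [AddCommGroup G] [LinearOrder G] [IsOrderedAddMonoid G]

lemma IsFinalSegment.isUpperSet_s15 {S : Set G} (h : IsFinalSegment S) : IsUpperSet S :=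
  fun _ _ hab ha => h.2.2 _ ha _ hab

lemma zero_mem_invGrp (M : Set G) : (0 : G) ∈ invGrp M := by
  simp [invGrp]

lemma neg_mem_invGrp {M : Set G} {γ : G} (h : γ ∈ invGrp M) : -γ ∈ invGrp M := by
  have h' := congrArg (Set.image (· + -γ)) h
  rw [Set.image_image] at h'
  simp only [add_neg_cancel_right, Set.image_id'] at h'
  exact h'.symm

lemma exists_pos_mem_invGrp_of_ssubset {M N : Set G} (h : invGrp M ⊂ invGrp N) :
    ∃ δ : G, 0 < δ ∧ δ ∈ invGrp N ∧ δ ∉ invGrp M := by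
  obtain ⟨γ, hγN, hγM⟩ := Set.exists_of_ssubset h
  rcases lt_trichotomy γ 0 with hneg | rfl | hpos
  · exact ⟨-γ, neg_pos.mpr hneg, neg_mem_invGrp hγN,
      fun hM => hγM (by simpa using neg_mem_invGrp hM)⟩
  · exact absurd (zero_mem_invGrp M) hγM
  · exact ⟨γ, hpos, hγN, hγM⟩

lemma IsUpperSet.exists_sub_notMem_of_notMem_invGrp {S : Set G} (hS : IsUpperSet S) {δ : G}
    (hδ : 0 ≤ δ) (hδS : δ ∉ invGrp S) : ∃ a ∈ S, a - δ ∉ S := by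
  have hshift : (· + δ) '' S ⊆ S := by
    rintro _ ⟨x, hx, rfl⟩
    exact hS (le_add_of_nonneg_right hδ) hx
  obtain ⟨a, ha, hna⟩ := Set.exists_of_ssubset (ssubset_of_subset_of_ne hshift hδS)
  exact ⟨a, ha, fun h => hna ⟨a - δ, h, sub_add_cancel a δ⟩⟩

lemma IsUpperSet.add_sub_compl_subset {S₁ S₂ : Set G} (h₁ : IsUpperSet S₁) (h₂ : IsUpperSet S₂) :
    S₁ + (S₂ - S₁ᶜ) ⊆ S₂ := by
  rintro _ ⟨p, hp, _, ⟨s, hs, b, hb, rfl⟩, rfl⟩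
  have hbp : b ≤ p := le_of_not_ge fun hpb => hb (h₁ hpb hp)
  have hrewrite : p + (s - b) = s + (p - b) := by abel
  show p + (s - b) ∈ S₂
  rw [hrewrite]
  exact h₂ (le_add_of_nonneg_right (sub_nonneg.mpr hbp)) hs

lemma subset_add_sub_compl_of_mem_invGrp {S₁ S₂ : Set G} {δ a : G} (hδ : δ ∈ invGrp S₂)
    (ha : a ∈ S₁) (haδ : a - δ ∉ S₁) : S₂ ⊆ S₁ + (S₂ - S₁ᶜ) := by
  intro x hx
  rw [← hδ] at hx
  obtain ⟨t, ht, rfl⟩ := hx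
  exact ⟨a, ha, t - (a - δ), ⟨t, ht, a - δ, haδ, rfl⟩, by dsimp only; abel⟩

end

theorem add_sub_compl_eq_of_invGrp_lt_general {G : Type*} [AddCommGroup G] [LinearOrder G] [IsOrderedAddMonoid G]
    (S₁ S₂ : Set G) (h₁ : IsFinalSegment S₁) (h₂ : IsFinalSegment S₂)
    (hlt : invGrp S₁ ⊂ invGrp S₂) :
    S₁ + (S₂ - S₁ᶜ) = S₂ := by
  obtain ⟨δ, hδpos, hδ₂, hδ₁⟩ := exists_pos_mem_invGrp_of_ssubset hlt
  obtain ⟨a, ha, haδ⟩ := h₁.isUpperSet_s15.exists_sub_notMem_of_notMem_invGrp hδpos.le hδ₁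
  exact (h₁.isUpperSet_s15.add_sub_compl_subset h₂.isUpperSet_s15).antisymm
    (subset_add_sub_compl_of_mem_invGrp hδ₂ ha haδ)

/-- If `S₁, S₂` are final segments with `S₁` nonprincipal and `𝒢(S₁) ⊊ 𝒢(S₂)`, then
`S₁ + (S₂ - S₁ᶜ) = S₂`. -/
theorem add_sub_compl_eq_of_invGrp_lt {G : Type*} [AddCommGroup G] [LinearOrder G] [IsOrderedAddMonoid G]
    (S₁ S₂ : Set G) (h₁ : IsFinalSegment S₁) (h₂ : IsFinalSegment S₂)
    (hnp₁ : ∀ t ∈ S₁, ∃ s ∈ S₁, s < t)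
    (hlt : invGrp S₁ ⊂ invGrp S₂) :
    S₁ + (S₂ - S₁ᶜ) = S₂ :=
  add_sub_compl_eq_of_invGrp_lt_general S₁ S₂ h₁ h₂ hlt
end
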